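/- Let $n\ge 2$, $\kappa>2$, $M>2$, $0<\alpha<2$, and set $a=\frac{M(n+2\kappa-2)}{\alpha}$, $b=\frac{M(n+2\kappa)}{\alpha}$, $\psi(t)=\frac{\kappa e^{at^{\alpha}}(1-bt^{\alpha})}{t^{n+2\kappa-1}}$. Then there exists $t_0=t_0(n,\alpha,\kappa,M)>0$ such that for all $0<t<t_0$, $-\frac{e^{at^{\alpha}}}{t^{n+2\kappa-2}}\Big(\kappa^2 e^{at^{\alpha}} t^{-n-2\kappa}+\psi'(t)+(n-1)\frac{\psi(t)}{t}\Big)-\psi(t)^2 \ge 0$. In fact, this inequality is equivalent to $2\alpha^2 - M(n+2\kappa)\big[(n+2\kappa)(\kappa-\alpha)+2\alpha\big]t^{\alpha} \ge 0$. -/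

import Mathlib

/-! With `E = exp (a t^α)`, `u = t^α` and `q = n + 2κ`, differentiating `ψ` explicitly shows that
the expression equals `κ M E² u t² / (α t^q)² · (2α² - M q (q (κ - α) + 2α) u)`. The prefactor is
positive, so the sign is that of the bracket, which tends to `2α² > 0` as `t → 0⁺`. -/

open Real Filter Topology Set

theorem hasDerivAt_exp_mul_rpow_div_rpow {κ a b α q t : ℝ} (ht : 0 < t) :
    HasDerivAt (fun s => κ * exp (a * s ^ α) * (1 - b * s ^ α) / s ^ (q - 1))
      (κ * exp (a * t ^ α) / t ^ q *
        (a * α * t ^ α * (1 - b * t ^ α) - b * α * t ^ α - (q - 1) * (1 - b * t ^ α))) t := by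
  have hpow : HasDerivAt (fun s : ℝ => s ^ α) (α * t ^ (α - 1)) t :=
    hasDerivAt_rpow_const (Or.inl ht.ne')
  have hnum : HasDerivAt (fun s => κ * exp (a * s ^ α) * (1 - b * s ^ α))
      (κ * (exp (a * t ^ α) * (a * (α * t ^ (α - 1)))) * (1 - b * t ^ α)
        + κ * exp (a * t ^ α) * -(b * (α * t ^ (α - 1)))) t :=
    ((hpow.const_mul a).exp.const_mul κ).mul ((hpow.const_mul b).const_sub 1)
  have hden : HasDerivAt (fun s : ℝ => s ^ (q - 1)) ((q - 1) * t ^ (q - 1 - 1)) t :=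
    hasDerivAt_rpow_const (Or.inl ht.ne')
  refine (hnum.div hden (rpow_pos_of_pos ht _).ne').congr_deriv ?_
  have htq := (rpow_pos_of_pos ht q).ne'
  simp only [rpow_sub ht, rpow_one]
  field_simp
  ring

theorem weiss_expression_eq {n κ M α a b : ℝ} (hα : α ≠ 0)
    (ha : a = M * (n + 2 * κ - 2) / α) (hb : b = M * (n + 2 * κ) / α) {ψ : ℝ → ℝ}
    (hψ : ∀ t > (0:ℝ), ψ t = κ * exp (a * t ^ α) * (1 - b * t ^ α) / t ^ (n + 2 * κ - 1))
    {t : ℝ} (ht : 0 < t) :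
    -(exp (a * t ^ α) / t ^ (n + 2 * κ - 2)) *
        (κ ^ 2 * exp (a * t ^ α) * t ^ (-n - 2 * κ) + deriv ψ t + (n - 1) * ψ t / t) - ψ t ^ 2
      = κ * M * exp (a * t ^ α) ^ 2 * t ^ α * t ^ 2 / (α * t ^ (n + 2 * κ)) ^ 2 *
        (2 * α ^ 2 - M * (n + 2 * κ) * ((n + 2 * κ) * (κ - α) + 2 * α) * t ^ α) := by
  have hderiv : deriv ψ t = κ * exp (a * t ^ α) / t ^ (n + 2 * κ) *
      (a * α * t ^ α * (1 - b * t ^ α) - b * α * t ^ α - (n + 2 * κ - 1) * (1 - b * t ^ α)) := by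
    have hψ_nhds : ψ =ᶠ[𝓝 t] fun s => κ * exp (a * s ^ α) * (1 - b * s ^ α) / s ^ (n + 2 * κ - 1) :=
      eventually_of_mem (Ioi_mem_nhds ht) hψ
    rw [hψ_nhds.deriv_eq, hasDerivAt_exp_mul_rpow_div_rpow ht |>.deriv]
  have hneg : t ^ (-n - 2 * κ) = (t ^ (n + 2 * κ))⁻¹ := by
    rw [← rpow_neg ht.le, neg_add']
  have htq := (rpow_pos_of_pos ht (n + 2 * κ)).ne'
  rw [hderiv, hψ t ht, hneg, ha, hb]
  simp only [rpow_sub ht, rpow_one, rpow_two]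
  field_simp
  ring

theorem weiss_expression_nonneg_iff {n κ M α a b : ℝ} (hκ : 0 < κ) (hM : 0 < M) (hα : α ≠ 0)
    (ha : a = M * (n + 2 * κ - 2) / α) (hb : b = M * (n + 2 * κ) / α) {ψ : ℝ → ℝ}
    (hψ : ∀ t > (0:ℝ), ψ t = κ * exp (a * t ^ α) * (1 - b * t ^ α) / t ^ (n + 2 * κ - 1))
    {t : ℝ} (ht : 0 < t) :
    0 ≤ -(exp (a * t ^ α) / t ^ (n + 2 * κ - 2)) *
        (κ ^ 2 * exp (a * t ^ α) * t ^ (-n - 2 * κ) + deriv ψ t + (n - 1) * ψ t / t) - ψ t ^ 2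
      ↔ 0 ≤ 2 * α ^ 2 - M * (n + 2 * κ) * ((n + 2 * κ) * (κ - α) + 2 * α) * t ^ α := by
  have := rpow_pos_of_pos ht α
  have := rpow_pos_of_pos ht (n + 2 * κ)
  rw [weiss_expression_eq hα ha hb hψ ht]
  exact mul_nonneg_iff_of_pos_left (by positivity)

theorem exists_forall_mul_rpow_lt {α : ℝ} (hα : 0 < α) (c : ℝ) {d : ℝ} (hd : 0 < d) :
    ∃ t₀ > (0:ℝ), ∀ t, 0 < t → t < t₀ → c * t ^ α < d := by
  have hlim : Tendsto (fun t : ℝ => c * t ^ α) (𝓝[>] 0) (𝓝 0) := by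
    have := ((continuousAt_rpow_const 0 α (Or.inr hα.le)).tendsto.const_mul c).mono_left
      (nhdsWithin_le_nhds (s := Ioi 0))
    rwa [zero_rpow hα.ne', mul_zero] at this
  obtain ⟨t₀, ht₀, hsub⟩ := mem_nhdsGT_iff_exists_Ioo_subset.1 (hlim.eventually (gt_mem_nhds hd))
  exact ⟨t₀, ht₀, fun t ht htt => hsub ⟨ht, htt⟩⟩

theorem weiss_weight_differential_inequality_general
    (n : ℕ) (κ M α : ℝ) (hκ : 2 < κ) (hM : 2 < M) (hα0 : 0 < α)
    (a b : ℝ) (ha : a = M * (n + 2 * κ - 2) / α) (hb : b = M * (n + 2 * κ) / α)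
    (ψ : ℝ → ℝ)
    (hψ : ∀ t > (0:ℝ), ψ t = κ * Real.exp (a * t ^ α) * (1 - b * t ^ α) / t ^ (n + 2 * κ - 1)) :
    (∃ t₀ > (0:ℝ), ∀ t, 0 < t → t < t₀ →
      0 ≤ -(Real.exp (a * t ^ α) / t ^ (n + 2 * κ - 2)) *
            (κ ^ 2 * Real.exp (a * t ^ α) * t ^ (-(n:ℝ) - 2 * κ) + deriv ψ t +
              (n - 1) * ψ t / t) - ψ t ^ 2) ∧
    (∀ t > (0:ℝ),
      (0 ≤ -(Real.exp (a * t ^ α) / t ^ (n + 2 * κ - 2)) *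
            (κ ^ 2 * Real.exp (a * t ^ α) * t ^ (-(n:ℝ) - 2 * κ) + deriv ψ t +
              (n - 1) * ψ t / t) - ψ t ^ 2) ↔
      0 ≤ 2 * α ^ 2 - M * (n + 2 * κ) * ((n + 2 * κ) * (κ - α) + 2 * α) * t ^ α) := by
  have hiff := fun t (ht : 0 < t) =>
    weiss_expression_nonneg_iff (by linarith) (by linarith) hα0.ne' ha hb hψ ht
  obtain ⟨t₀, ht₀, hsmall⟩ := exists_forall_mul_rpow_lt hα0
    (M * (n + 2 * κ) * ((n + 2 * κ) * (κ - α) + 2 * α)) (by positivity : 0 < 2 * α ^ 2)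
  exact ⟨⟨t₀, ht₀, fun t ht htt => (hiff t ht).2 (by linarith [hsmall t ht htt])⟩, hiff⟩

/-- With `a = M(n+2κ-2)/α`, `b = M(n+2κ)/α` and
`ψ(t) = κ e^{a t^α}(1 - b t^α)/t^{n+2κ-1}`, there is `t₀ = t₀(n,α,κ,M) > 0` such that
`-(e^{a t^α}/t^{n+2κ-2})(κ² e^{a t^α} t^{-n-2κ} + ψ'(t) + (n-1)ψ(t)/t) - ψ(t)² ≥ 0`
for `0 < t < t₀`; moreover for every `t > 0` this inequality is equivalent to
`2α² - M(n+2κ)[(n+2κ)(κ-α)+2α] t^α ≥ 0`. -/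
theorem weiss_weight_differential_inequality
    (n : ℕ) (hn : 2 ≤ n) (κ M α : ℝ) (hκ : 2 < κ) (hM : 2 < M) (hα0 : 0 < α) (hα2 : α < 2)
    (a b : ℝ) (ha : a = M * (n + 2 * κ - 2) / α) (hb : b = M * (n + 2 * κ) / α)
    (ψ : ℝ → ℝ)
    (hψ : ∀ t > (0:ℝ), ψ t = κ * Real.exp (a * t ^ α) * (1 - b * t ^ α) / t ^ (n + 2 * κ - 1)) :
    (∃ t₀ > (0:ℝ), ∀ t, 0 < t → t < t₀ →
      0 ≤ -(Real.exp (a * t ^ α) / t ^ (n + 2 * κ - 2)) *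
            (κ ^ 2 * Real.exp (a * t ^ α) * t ^ (-(n:ℝ) - 2 * κ) + deriv ψ t +
              (n - 1) * ψ t / t) - ψ t ^ 2) ∧
    (∀ t > (0:ℝ),
      (0 ≤ -(Real.exp (a * t ^ α) / t ^ (n + 2 * κ - 2)) *
            (κ ^ 2 * Real.exp (a * t ^ α) * t ^ (-(n:ℝ) - 2 * κ) + deriv ψ t +
              (n - 1) * ψ t / t) - ψ t ^ 2) ↔
      0 ≤ 2 * α ^ 2 - M * (n + 2 * κ) * ((n + 2 * κ) * (κ - α) + 2 * α) * t ^ α) :=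
  weiss_weight_differential_inequality_general n κ M α hκ hM hα0 a b ha hb ψ hψ
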